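/- Let Ô : ℝⁿ → ℝ^{n_y} and M̂ : ℝⁿ → ℝ^{n_w} be linear maps, y ∈ ℝ^{n_y}, v₀ ∈ ℝⁿ, and let Γ_obs, Γ̂ and R be symmetric positive definite matrices of appropriate sizes. Let (λ_k)_{k∈ℕ} ⊂ ℝ₊ be strictly monotonically increasing with λ_k → ∞, and for each k let v_k be the unique global minimizer of J_{λ_k}(v) = ½‖Ô v − y‖²_{Γ_obs} + (λ_k/2)‖M̂ v‖²_{Γ̂} + ½‖v − v₀‖²_R. Then every accumulation point of the sequence (v_k) equals the unique global minimizer of ½‖Ô v − y‖²_{Γ_obs} + ½‖v − v₀‖²_R over the subspace {v : M̂ v = 0}. -/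

import Mathlib

/-! Comparing `v_k` with a feasible `w` (`M̂ w = 0`) gives `F v_k + λ_k P v_k ≤ F w`, where `F` is
the regularised misfit and `P ≥ 0` the penalty. As `F ≥ 0`, this yields `P v_k ≤ F 0 / λ_k → 0`
and, once `λ_k ≥ 0`, `F v_k ≤ F w`. Both bounds describe closed sets, so they pass to any cluster
point `v̄`, which is therefore feasible and minimises `F` on `ker M̂`. The minimiser is unique
because the `R`-term makes `F` strictly convex. -/

open Matrix Filter

/-- Squared weighted norm `‖x‖_A² = ⟨x, A⁻¹ x⟩` for an s.p.d. matrix `A`. -/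
noncomputable def wsq {ι : Type*} [Fintype ι] [DecidableEq ι]
    (A : Matrix ι ι ℝ) (x : ι → ℝ) : ℝ :=
  x ⬝ᵥ (A⁻¹ *ᵥ x)

open Set Topology

theorem StrictConvexOn.const_mul {E : Type*} [AddCommMonoid E] [Module ℝ E] {s : Set E}
    {f : E → ℝ} {c : ℝ} (hc : 0 < c) (hf : StrictConvexOn ℝ s f) :
    StrictConvexOn ℝ s fun x => c * f x :=
  ⟨hf.1, fun x hx y hy hxy a b ha hb hab => by
    have h := hf.2 hx hy hxy ha hb hab
    simp only [smul_eq_mul] at h ⊢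
    nlinarith [mul_lt_mul_of_pos_left h hc]⟩

section WeightedNorm

variable {ι : Type*} [Fintype ι] [DecidableEq ι] {A : Matrix ι ι ℝ}

@[simp]
theorem wsq_zero (A : Matrix ι ι ℝ) : wsq A 0 = 0 := by
  simp [wsq]

theorem wsq_smul_add_smul (A : Matrix ι ι ℝ) (x y : ι → ℝ) {a b : ℝ} (hab : a + b = 1) :
    wsq A (a • x + b • y) = a * wsq A x + b * wsq A y - a * b * wsq A (x - y) := by
  obtain rfl : b = 1 - a := by linarith
  simp only [wsq, mulVec_add, mulVec_sub, mulVec_smul, dotProduct_add, dotProduct_sub,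
    add_dotProduct, sub_dotProduct, dotProduct_smul, smul_dotProduct, smul_eq_mul]
  ring

theorem wsq_nonneg (hA : A.PosDef) (x : ι → ℝ) : 0 ≤ wsq A x :=
  hA.inv.posSemidef.dotProduct_mulVec_nonneg x

theorem wsq_pos (hA : A.PosDef) {x : ι → ℝ} (hx : x ≠ 0) : 0 < wsq A x := by
  simpa [wsq] using hA.inv.dotProduct_mulVec_pos hx

theorem wsq_eq_zero_iff (hA : A.PosDef) {x : ι → ℝ} : wsq A x = 0 ↔ x = 0 :=
  ⟨fun h => by_contra fun hx => (wsq_pos hA hx).ne' h, fun h => h ▸ wsq_zero A⟩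

@[fun_prop]
theorem continuous_wsq (A : Matrix ι ι ℝ) : Continuous (wsq A) :=
  continuous_id.dotProduct (continuous_const.matrix_mulVec continuous_id)

theorem strictConvexOn_wsq (hA : A.PosDef) : StrictConvexOn ℝ univ (wsq A) := by
  refine ⟨convex_univ, fun x _ y _ hxy a b ha hb hab => ?_⟩
  rw [wsq_smul_add_smul A x y hab, smul_eq_mul, smul_eq_mul]
  have := mul_pos (mul_pos ha hb) (wsq_pos hA (sub_ne_zero.mpr hxy))
  linarith

theorem strictConvexOn_wsq_sub (hA : A.PosDef) (c : ι → ℝ) :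
    StrictConvexOn ℝ univ fun x => wsq A (x - c) := by
  simpa [Function.comp_def, ← sub_eq_add_neg] using (strictConvexOn_wsq hA).translate_left (-c)

theorem convexOn_wsq_comp_sub {E : Type*} [AddCommGroup E] [Module ℝ E] (hA : A.PosDef)
    (L : E →ₗ[ℝ] ι → ℝ) (c : ι → ℝ) : ConvexOn ℝ univ fun x => wsq A (L x - c) := by
  simpa [Function.comp_def] using
    (strictConvexOn_wsq hA).convexOn.comp_affineMap (L.toAffineMap - AffineMap.const ℝ E c)

end WeightedNorm

section PenaltyMethod

variable {X ι : Type*} {l : Filter ι} {F P : X → ℝ} {lam : ι → ℝ}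
  {v : ι → X} {w₀ : X}

theorem tendsto_penalty_nhds_zero (hF : BddBelow (range F)) (hP : ∀ x, 0 ≤ P x)
    (hlam : Tendsto lam l atTop)
    (hv : ∀ k w, F (v k) + lam k * P (v k) ≤ F w + lam k * P w) (hw₀ : P w₀ = 0) :
    Tendsto (fun k => P (v k)) l (𝓝 0) := by
  obtain ⟨m, hm⟩ := hF
  have hbound : ∀ k, lam k * P (v k) ≤ F w₀ - m := fun k => by
    have hcmp := hv k w₀
    rw [hw₀, mul_zero] at hcmp
    linarith [hm (mem_range_self (v k))]
  refine squeeze_zero' (g := fun k => (F w₀ - m) / lam k) (.of_forall fun k => hP (v k)) ?_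
    (tendsto_const_nhds.div_atTop hlam)
  filter_upwards [hlam.eventually_gt_atTop 0] with k hk
  rw [le_div_iff₀ hk, mul_comm]
  exact hbound k

theorem penalty_eventually_le (hP : ∀ x, 0 ≤ P x) (hlam : Tendsto lam l atTop)
    (hv : ∀ k w, F (v k) + lam k * P (v k) ≤ F w + lam k * P w) {w : X} (hw : P w = 0) :
    ∀ᶠ k in l, F (v k) ≤ F w := by
  filter_upwards [hlam.eventually_ge_atTop 0] with k hk
  have := hv k w
  rw [hw, mul_zero] at this
  nlinarith [mul_nonneg hk (hP (v k))]

theorem isMinOn_of_mapClusterPt_penalty [TopologicalSpace X] (hFc : Continuous F)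
    (hPc : Continuous P) (hF : BddBelow (range F)) (hP : ∀ x, 0 ≤ P x) (hlam : Tendsto lam l atTop)
    (hv : ∀ k w, F (v k) + lam k * P (v k) ≤ F w + lam k * P w) (hw₀ : P w₀ = 0)
    {x : X} (hx : MapClusterPt x l v) :
    P x = 0 ∧ IsMinOn F {w | P w = 0} x := by
  refine ⟨le_antisymm (le_of_forall_gt_imp_ge_of_dense fun ε hε => ?_) (hP x), fun w hw => ?_⟩
  · exact (isClosed_le hPc continuous_const).mem_of_mapClusterPt hx <|
      ((tendsto_penalty_nhds_zero hF hP hlam hv hw₀).eventually_lt_const hε).mono fun _ => le_of_lt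
  · exact (isClosed_le hFc continuous_const).mem_of_mapClusterPt hx
      (penalty_eventually_le hP hlam hv hw)

end PenaltyMethod

theorem penalty_method_linear_convergence_general
    {n ny nw : ℕ}
    (Ohat : (Fin n → ℝ) →ₗ[ℝ] (Fin ny → ℝ))
    (Mhat : (Fin n → ℝ) →ₗ[ℝ] (Fin nw → ℝ))
    (y : Fin ny → ℝ) (v₀ : Fin n → ℝ)
    (Γobs : Matrix (Fin ny) (Fin ny) ℝ) (Γhat : Matrix (Fin nw) (Fin nw) ℝ)
    (R : Matrix (Fin n) (Fin n) ℝ)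
    (hΓobs : Γobs.PosDef) (hΓhat : Γhat.PosDef) (hR : R.PosDef)
    (lam : ℕ → ℝ)
    (hlamtop : Tendsto lam atTop atTop)
    (v : ℕ → Fin n → ℝ)
    (hmin : ∀ k, ∀ w : Fin n → ℝ,
      (1/2) * wsq Γobs (Ohat (v k) - y) + (lam k / 2) * wsq Γhat (Mhat (v k))
          + (1/2) * wsq R (v k - v₀)
        ≤ (1/2) * wsq Γobs (Ohat w - y) + (lam k / 2) * wsq Γhat (Mhat w)
          + (1/2) * wsq R (w - v₀))
    (vbar : Fin n → ℝ) (hacc : MapClusterPt vbar atTop v) :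
    (Mhat vbar = 0 ∧ ∀ w : Fin n → ℝ, Mhat w = 0 →
        (1/2) * wsq Γobs (Ohat vbar - y) + (1/2) * wsq R (vbar - v₀)
          ≤ (1/2) * wsq Γobs (Ohat w - y) + (1/2) * wsq R (w - v₀)) ∧
    ∀ w : Fin n → ℝ,
      (Mhat w = 0 ∧ ∀ z : Fin n → ℝ, Mhat z = 0 →
          (1/2) * wsq Γobs (Ohat w - y) + (1/2) * wsq R (w - v₀)
            ≤ (1/2) * wsq Γobs (Ohat z - y) + (1/2) * wsq R (z - v₀)) →
        vbar = w := by
  let F := fun w => (1/2) * wsq Γobs (Ohat w - y) + (1/2) * wsq R (w - v₀)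
  let P := fun w => (1/2) * wsq Γhat (Mhat w)
  have hker : {w | P w = 0} = {w | Mhat w = 0} := by
    ext w; simp [P, wsq_eq_zero_iff hΓhat]
  have hF : ∀ w, 0 ≤ F w := fun w => by
    have := wsq_nonneg hΓobs (Ohat w - y); have := wsq_nonneg hR (w - v₀); positivity
  have hv : ∀ k w, F (v k) + lam k * P (v k) ≤ F w + lam k * P w := fun k w => by
    simp only [F, P]; linarith [hmin k w]
  have hP : ∀ w, 0 ≤ P w := fun w => mul_nonneg (by norm_num) (wsq_nonneg hΓhat _)
  obtain ⟨hfeas, hopt⟩ := isMinOn_of_mapClusterPt_penalty (by fun_prop) (by fun_prop)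
    ⟨0, by rintro _ ⟨w, rfl⟩; exact hF w⟩ hP hlamtop hv (w₀ := 0) (by simp [P]) hacc
  replace hfeas : vbar ∈ {w | Mhat w = 0} := hker ▸ hfeas
  rw [hker] at hopt
  have hconv : StrictConvexOn ℝ {w | Mhat w = 0} F :=
    (((convexOn_wsq_comp_sub hΓobs Ohat y).smul (by norm_num : (0:ℝ) ≤ 1/2)).add_strictConvexOn
      ((strictConvexOn_wsq_sub hR v₀).const_mul (by norm_num))).subset (subset_univ _)
      (LinearMap.ker Mhat).convex
  exact ⟨⟨hfeas, fun w hw => hopt hw⟩, fun w ⟨hw, hwopt⟩ =>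
    hconv.eq_of_isMinOn hopt (fun z hz => hwopt z hz) hfeas hw⟩

/-- Convergence of the penalty method in the linear setting (Theorem 1): every
accumulation point of the sequence of unique global minimizers `v_k` of the
penalized losses `J_{λ_k}` with `λ_k → ∞` equals the unique global minimizer of
the regularized data-misfit over the subspace `{v : M̂ v = 0}`. -/
theorem penalty_method_linear_convergence
    {n ny nw : ℕ}
    (Ohat : (Fin n → ℝ) →ₗ[ℝ] (Fin ny → ℝ))
    (Mhat : (Fin n → ℝ) →ₗ[ℝ] (Fin nw → ℝ))
    (y : Fin ny → ℝ) (v₀ : Fin n → ℝ)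
    (Γobs : Matrix (Fin ny) (Fin ny) ℝ) (Γhat : Matrix (Fin nw) (Fin nw) ℝ)
    (R : Matrix (Fin n) (Fin n) ℝ)
    (hΓobs : Γobs.PosDef) (hΓhat : Γhat.PosDef) (hR : R.PosDef)
    (lam : ℕ → ℝ) (hlampos : ∀ k, 0 < lam k) (hlammono : StrictMono lam)
    (hlamtop : Tendsto lam atTop atTop)
    (v : ℕ → Fin n → ℝ)
    (hmin : ∀ k, ∀ w : Fin n → ℝ,
      (1/2) * wsq Γobs (Ohat (v k) - y) + (lam k / 2) * wsq Γhat (Mhat (v k))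
          + (1/2) * wsq R (v k - v₀)
        ≤ (1/2) * wsq Γobs (Ohat w - y) + (lam k / 2) * wsq Γhat (Mhat w)
          + (1/2) * wsq R (w - v₀))
    (vbar : Fin n → ℝ) (hacc : MapClusterPt vbar atTop v) :
    (Mhat vbar = 0 ∧ ∀ w : Fin n → ℝ, Mhat w = 0 →
        (1/2) * wsq Γobs (Ohat vbar - y) + (1/2) * wsq R (vbar - v₀)
          ≤ (1/2) * wsq Γobs (Ohat w - y) + (1/2) * wsq R (w - v₀)) ∧
    ∀ w : Fin n → ℝ,
      (Mhat w = 0 ∧ ∀ z : Fin n → ℝ, Mhat z = 0 →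
          (1/2) * wsq Γobs (Ohat w - y) + (1/2) * wsq R (w - v₀)
            ≤ (1/2) * wsq Γobs (Ohat z - y) + (1/2) * wsq R (z - v₀)) →
        vbar = w :=
  penalty_method_linear_convergence_general Ohat Mhat y v₀ Γobs Γhat R hΓobs hΓhat hR lam hlamtop v
    hmin vbar hacc
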